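/- Let (X_{N,k})_{1 ≤ k ≤ N} be real random variables adapted to a filtration (G_k^N), and define Y_{N,k} = X_{N,k} − E[X_{N,k} | G_{k−1}^N]. Then E[ sup_{1 ≤ k ≤ N} |Y_{N,k}| ] ≤ 3 · E[ sup_{1 ≤ k ≤ N} |X_{N,k}| ]. -/

import Mathlib

open MeasureTheory

/-!
The running maximum `M n = max_{1 ≤ k ≤ n} |X k|` is adapted and nondecreasing, hence a
submartingale whose predictable compensator `A n = ∑_{i < n} E[M (i+1) - M i | 𝒢 i]` is nonnegative,
nondecreasing and satisfies `E[A N] = E[M N]`. Since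
`|E[X (i+1) | 𝒢 i]| ≤ E[M (i+1) | 𝒢 i] = M i + (A (i+1) - A i) ≤ M N + A N`,
every centered term is bounded by `2 M N + A N`, whose expectation is `3 E[M N]`.
-/

namespace Real

variable {ι : Type*} {s : Finset ι} {f : ι → ℝ} {a : ℝ}

lemma biSup_finset_le (hf : ∀ i ∈ s, f i ≤ a) (ha : 0 ≤ a) : ⨆ i ∈ s, f i ≤ a :=
  Real.iSup_le (fun i => Real.iSup_le (hf i) ha) ha

lemma le_biSup_finset {i : ι} (hi : i ∈ s) : f i ≤ ⨆ j ∈ s, f j := by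
  have hbdd : BddAbove (Set.range fun j => ⨆ _ : j ∈ s, f j) := by
    refine ⟨∑ j ∈ s, |f j|, ?_⟩
    rintro _ ⟨j, rfl⟩
    exact Real.iSup_le (fun hj => (le_abs_self _).trans (Finset.single_le_sum
      (fun k _ => abs_nonneg (f k)) hj)) (Finset.sum_nonneg fun k _ => abs_nonneg (f k))
  exact (ciSup_pos hi).symm.le.trans (le_ciSup hbdd i)

lemma biSup_finset_nonneg (hf : ∀ i ∈ s, 0 ≤ f i) : 0 ≤ ⨆ i ∈ s, f i :=
  Real.iSup_nonneg fun i => Real.iSup_nonneg (hf i)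

end Real

section RunningMax

variable {Ω : Type*} {X : ℕ → Ω → ℝ}

noncomputable def runningMaxAbs (X : ℕ → Ω → ℝ) (n : ℕ) (ω : Ω) : ℝ :=
  ⨆ k ∈ Finset.Icc 1 n, |X k ω|

lemma runningMaxAbs_nonneg (X : ℕ → Ω → ℝ) (n : ℕ) (ω : Ω) : 0 ≤ runningMaxAbs X n ω :=
  Real.biSup_finset_nonneg fun _ _ => abs_nonneg _

lemma abs_le_runningMaxAbs {k n : ℕ} (hk : 1 ≤ k) (hkn : k ≤ n) (ω : Ω) :
    |X k ω| ≤ runningMaxAbs X n ω :=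
  Real.le_biSup_finset (f := fun k => |X k ω|) (Finset.mem_Icc.2 ⟨hk, hkn⟩)

@[simp]
lemma runningMaxAbs_zero : runningMaxAbs X 0 = 0 := by
  ext ω
  simp [runningMaxAbs]

lemma runningMaxAbs_add_one (n : ℕ) (ω : Ω) :
    runningMaxAbs X (n + 1) ω = max (runningMaxAbs X n ω) |X (n + 1) ω| := by
  refine le_antisymm (Real.biSup_finset_le (fun k hk => ?_) ?_) ?_
  · obtain ⟨hk1, hkn⟩ := Finset.mem_Icc.1 hk
    rcases hkn.lt_or_eq with hkn | rfl
    · exact le_max_of_le_left (abs_le_runningMaxAbs hk1 (Nat.le_of_lt_succ hkn) ω)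
    · exact le_max_right _ _
  · exact le_max_of_le_left (runningMaxAbs_nonneg X n ω)
  · exact max_le (Real.biSup_finset_le (fun k hk => abs_le_runningMaxAbs
      (Finset.mem_Icc.1 hk).1 ((Finset.mem_Icc.1 hk).2.trans n.le_succ) ω)
      (runningMaxAbs_nonneg X _ ω)) (abs_le_runningMaxAbs n.succ_pos le_rfl ω)

lemma monotone_runningMaxAbs (ω : Ω) : Monotone (runningMaxAbs X · ω) :=
  monotone_nat_of_le_succ fun n => (runningMaxAbs_add_one n ω).ge.trans' (le_max_left _ _)

variable {m0 : MeasurableSpace Ω}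

lemma stronglyAdapted_runningMaxAbs {𝒢 : Filtration ℕ m0} (hadap : StronglyAdapted 𝒢 X) :
    StronglyAdapted 𝒢 (runningMaxAbs X) := by
  intro n
  induction n with
  | zero => simpa using stronglyMeasurable_zero
  | succ n ih =>
    rw [funext (runningMaxAbs_add_one n)]
    exact continuous_max.comp_stronglyMeasurable
      ((ih.mono (𝒢.mono n.le_succ)).prodMk (hadap (n + 1)).norm)

lemma integrable_runningMaxAbs {μ : Measure Ω} (hint : ∀ k, Integrable (X k) μ) (n : ℕ) :
    Integrable (runningMaxAbs X n) μ := by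
  induction n with
  | zero => simp
  | succ n ih =>
    rw [funext (runningMaxAbs_add_one n)]
    exact ih.sup (hint (n + 1)).abs

lemma submartingale_runningMaxAbs {𝒢 : Filtration ℕ m0} {μ : Measure Ω} [IsFiniteMeasure μ]
    (hadap : StronglyAdapted 𝒢 X) (hint : ∀ k, Integrable (X k) μ) :
    Submartingale (runningMaxAbs X) 𝒢 μ :=
  submartingale_of_condExp_sub_nonneg_nat (stronglyAdapted_runningMaxAbs hadap)
    (integrable_runningMaxAbs hint) fun n => condExp_nonneg <| ae_of_all _ fun ω =>
      sub_nonneg.2 (monotone_runningMaxAbs ω n.le_succ)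

end RunningMax

namespace MeasureTheory

variable {Ω : Type*} {m0 : MeasurableSpace Ω} {μ : Measure Ω} {ℱ : Filtration ℕ m0}
  {f : ℕ → Ω → ℝ}

lemma integrable_predictablePart (n : ℕ) : Integrable (predictablePart f ℱ μ n) μ :=
  integrable_finsetSum' _ fun _ _ => integrable_condExp

variable [IsFiniteMeasure μ]

lemma integral_predictablePart (hf : ∀ n, Integrable (f n) μ) (n : ℕ) :
    ∫ ω, predictablePart f ℱ μ n ω ∂μ = ∫ ω, f n ω ∂μ - ∫ ω, f 0 ω ∂μ := by
  simp only [predictablePart, Finset.sum_apply]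
  rw [integral_finsetSum _ fun i _ => integrable_condExp,
    ← Finset.sum_range_sub fun i => ∫ ω, f i ω ∂μ]
  refine Finset.sum_congr rfl fun i _ => ?_
  rw [integral_condExp (ℱ.le i), Pi.sub_def, integral_sub (hf (i + 1)) (hf i)]

lemma Submartingale.condExp_add_one_le_add_predictablePart (hf : Submartingale f ℱ μ)
    {n N : ℕ} (hn : n < N) :
    μ[f (n + 1) | ℱ n] ≤ᵐ[μ] f n + predictablePart f ℱ μ N := by
  have hsplit : μ[f (n + 1) | ℱ n] =ᵐ[μ] f n + μ[f (n + 1) - f n | ℱ n] := by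
    calc μ[f (n + 1) | ℱ n] = μ[f n + (f (n + 1) - f n) | ℱ n] := by rw [add_sub_cancel]
      _ =ᵐ[μ] μ[f n | ℱ n] + μ[f (n + 1) - f n | ℱ n] :=
        condExp_add (hf.integrable n) ((hf.integrable (n + 1)).sub (hf.integrable n)) _
      _ = f n + μ[f (n + 1) - f n | ℱ n] := by
        rw [condExp_of_stronglyMeasurable (ℱ.le n) (hf.stronglyAdapted n) (hf.integrable n)]
  filter_upwards [hsplit, hf.monotone_predictablePart, hf.predictablePart_nonneg]
    with ω hω hmono hnonneg
  have hincr := congrFun (predictablePart_add_one (f := f) (ℱ := ℱ) (μ := μ) n) ω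
  simp only [Pi.add_apply] at hω hincr ⊢
  linarith [hmono hn.nat_succ_le, hnonneg n]

end MeasureTheory

section CenteredMax

variable {Ω : Type*} {m0 : MeasurableSpace Ω} {μ : Measure Ω} [IsFiniteMeasure μ]
  {𝒢 : Filtration ℕ m0} {X : ℕ → Ω → ℝ}

lemma ae_abs_condExp_le_runningMaxAbs_add_predictablePart (hadap : StronglyAdapted 𝒢 X)
    (hint : ∀ k, Integrable (X k) μ) {i N : ℕ} (hi : i < N) :
    ∀ᵐ ω ∂μ, |μ[X (i + 1) | 𝒢 i] ω|
      ≤ runningMaxAbs X N ω + predictablePart (runningMaxAbs X) 𝒢 μ N ω := by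
  have habs_le : μ[fun ω => |X (i + 1) ω| | 𝒢 i] ≤ᵐ[μ] μ[runningMaxAbs X (i + 1) | 𝒢 i] :=
    condExp_mono (hint (i + 1)).abs (integrable_runningMaxAbs hint (i + 1))
      (ae_of_all _ (abs_le_runningMaxAbs i.succ_pos le_rfl))
  filter_upwards [abs_condExp_ae_le_condExp_abs (X (i + 1)), habs_le,
    (submartingale_runningMaxAbs hadap hint).condExp_add_one_le_add_predictablePart hi]
    with ω h_abs h_mono h_comp
  have hM : runningMaxAbs X i ω ≤ runningMaxAbs X N ω := monotone_runningMaxAbs ω hi.le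
  exact h_abs.trans (h_mono.trans (h_comp.trans (by simpa using hM)))

lemma ae_biSup_abs_sub_condExp_le (hadap : StronglyAdapted 𝒢 X)
    (hint : ∀ k, Integrable (X k) μ) (N : ℕ) :
    ∀ᵐ ω ∂μ, ⨆ k ∈ Finset.Icc 1 N, |X k ω - μ[X k | 𝒢 (k - 1)] ω|
      ≤ 2 * runningMaxAbs X N ω + predictablePart (runningMaxAbs X) 𝒢 μ N ω := by
  have hcond := (Filter.eventually_all_finset (Finset.range N)).2 fun i hi =>
    ae_abs_condExp_le_runningMaxAbs_add_predictablePart hadap hint (Finset.mem_range.1 hi)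
  filter_upwards [hcond, (submartingale_runningMaxAbs hadap hint).predictablePart_nonneg]
    with ω hω hA
  refine Real.biSup_finset_le (fun k hk => ?_) (by linarith [runningMaxAbs_nonneg X N ω, hA N])
  obtain ⟨hk1, hkN⟩ := Finset.mem_Icc.1 hk
  obtain ⟨i, rfl⟩ : ∃ i, k = i + 1 := ⟨k - 1, by omega⟩
  rw [Nat.add_sub_cancel]
  linarith [abs_sub (X (i + 1) ω) (μ[X (i + 1) | 𝒢 i] ω),
    abs_le_runningMaxAbs (X := X) hk1 hkN ω, hω i (Finset.mem_range.2 hkN)]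

end CenteredMax

theorem expected_sup_centered_le_general {Ω : Type*} {m0 : MeasurableSpace Ω}
    (μ : Measure Ω) [IsProbabilityMeasure μ]
    (N : ℕ) (𝒢 : Filtration ℕ m0)
    (X : ℕ → Ω → ℝ)
    (hadap : ∀ k, StronglyMeasurable[𝒢 k] (X k))
    (hint : ∀ k, Integrable (X k) μ) :
    ∫ ω, (⨆ k ∈ Finset.Icc 1 N, |X k ω - (μ[X k | 𝒢 (k - 1)]) ω|) ∂μ
      ≤ 3 * ∫ ω, (⨆ k ∈ Finset.Icc 1 N, |X k ω|) ∂μ := by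
  have hM := integrable_runningMaxAbs hint N
  calc ∫ ω, (⨆ k ∈ Finset.Icc 1 N, |X k ω - (μ[X k | 𝒢 (k - 1)]) ω|) ∂μ
      ≤ ∫ ω, 2 * runningMaxAbs X N ω + predictablePart (runningMaxAbs X) 𝒢 μ N ω ∂μ :=
        integral_mono_of_nonneg
          (ae_of_all _ fun ω => Real.biSup_finset_nonneg fun _ _ => abs_nonneg _)
          ((hM.const_mul 2).add (integrable_predictablePart N))
          (ae_biSup_abs_sub_condExp_le hadap hint N)
    _ = 3 * ∫ ω, runningMaxAbs X N ω ∂μ := by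
        rw [integral_add (hM.const_mul 2) (integrable_predictablePart N), integral_const_mul,
          integral_predictablePart (integrable_runningMaxAbs hint), runningMaxAbs_zero]
        simp only [Pi.zero_apply, integral_zero]
        ring

/-- Centering a finite adapted family at its conditional expectations at most triples the
expected maximum: for `Y k = X k - E[X k | 𝒢 (k-1)]`,
`E[sup_{1 ≤ k ≤ N} |Y k|] ≤ 3 E[sup_{1 ≤ k ≤ N} |X k|]`. -/
theorem expected_sup_centered_le {Ω : Type*} {m0 : MeasurableSpace Ω}
    (μ : Measure Ω) [IsProbabilityMeasure μ]
    (N : ℕ) (hN : 1 ≤ N) (𝒢 : Filtration ℕ m0)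
    (X : ℕ → Ω → ℝ)
    (hadap : ∀ k, StronglyMeasurable[𝒢 k] (X k))
    (hint : ∀ k, Integrable (X k) μ) :
    ∫ ω, (⨆ k ∈ Finset.Icc 1 N, |X k ω - (μ[X k | 𝒢 (k - 1)]) ω|) ∂μ
      ≤ 3 * ∫ ω, (⨆ k ∈ Finset.Icc 1 N, |X k ω|) ∂μ :=
  expected_sup_centered_le_general μ N 𝒢 X hadap hint
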